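/- arXiv:1705.02767 — 3 statements merged into one kernel-verified Lean document; each statement's English description precedes it below -/
import Mathlib

section
/- Let (A, μ) be a multiarrangement in K^ℓ and suppose θ_1, ..., θ_ℓ ∈ D(A, μ) are homogeneous and independent over S with ∑_i pdeg(θ_i) = |μ| = ∑_{H ∈ A} μ(H). Then {θ_1, ..., θ_ℓ} is an S-basis of D(A, μ), so (A, μ) is free. -/
open MvPolynomial

open scoped Classical

noncomputable section

/-- A (polynomial) derivation on `K[x_1,...,x_n]`, given by its coefficient
vector: `θ` represents `∑ i, θ i * ∂/∂ x i`. -/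
abbrev MvDer (n : ℕ) (K : Type*) [Field K] : Type _ := Fin n → MvPolynomial (Fin n) K

/-- Application of a derivation (given by its coefficient vector) to a polynomial,
as a linear map over the polynomial ring. -/
def derAppL {K : Type*} [Field K] {n : ℕ} (f : MvPolynomial (Fin n) K) :
    MvDer n K →ₗ[MvPolynomial (Fin n) K] MvPolynomial (Fin n) K where
  toFun θ := ∑ i, θ i * MvPolynomial.pderiv i f
  map_add' θ₁ θ₂ := by
    simp [add_mul, Finset.sum_add_distrib]
  map_smul' c θ := by
    simp [Finset.mul_sum, smul_eq_mul, mul_assoc]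

/-- The module of derivations `D(A, μ)` of the multiarrangement with defining linear
forms `A` and multiplicity function `μ`:
`D(A,μ) = {θ : θ(α) ∈ α^(μ α) · S for all α ∈ A}`. -/
def Dmod {K : Type*} [Field K] {n : ℕ} (A : Finset (MvPolynomial (Fin n) K))
    (μ : MvPolynomial (Fin n) K → ℕ) :
    Submodule (MvPolynomial (Fin n) K) (MvDer n K) :=
  ⨅ α ∈ A, Submodule.comap (derAppL α) (Ideal.span {α ^ μ α})

/-- The module of derivations of a multiarrangement given as a finite set of
(form, multiplicity) pairs. -/
def DmodP {K : Type*} [Field K] {n : ℕ} (P : Finset (MvPolynomial (Fin n) K × ℕ)) :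
    Submodule (MvPolynomial (Fin n) K) (MvDer n K) :=
  ⨅ p ∈ P, Submodule.comap (derAppL p.1) (Ideal.span {p.1 ^ p.2})

/-- A derivation is homogeneous of polynomial degree `d` if all its coefficient
polynomials are homogeneous of degree `d`. -/
def IsHomogDer {K : Type*} [Field K] {n : ℕ} (θ : MvDer n K) (d : ℕ) : Prop :=
  ∀ i, (θ i).IsHomogeneous d

/-- `θ` is a basis of the submodule `D` of the module of derivations. -/
def IsBasisOf {K : Type*} [Field K] {n : ℕ} (θ : Fin n → MvDer n K)
    (D : Submodule (MvPolynomial (Fin n) K) (MvDer n K)) : Prop :=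
  (∀ i, θ i ∈ D) ∧ LinearIndependent (MvPolynomial (Fin n) K) θ ∧
    Submodule.span (MvPolynomial (Fin n) K) (Set.range θ) = D

/-- `D` is a free module with a homogeneous basis of degrees `e 0, ..., e (n-1)`. -/
def FreeWithExps {K : Type*} [Field K] {n : ℕ}
    (D : Submodule (MvPolynomial (Fin n) K) (MvDer n K)) (e : Fin n → ℕ) : Prop :=
  ∃ θ : Fin n → MvDer n K, IsBasisOf θ D ∧ ∀ i, IsHomogDer (θ i) (e i)

/-- `D` is a free module with a homogeneous basis whose multiset of degrees is `E`. -/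
def FreeWithExpM {K : Type*} [Field K] {n : ℕ}
    (D : Submodule (MvPolynomial (Fin n) K) (MvDer n K)) (E : Multiset ℕ) : Prop :=
  ∃ (θ : Fin n → MvDer n K) (d : Fin n → ℕ), IsBasisOf θ D ∧
    (∀ i, IsHomogDer (θ i) (d i)) ∧ Multiset.map d Finset.univ.val = E

/-- The zero set (kernel) of the linear form given by the polynomial `α`. -/
def kerV {K : Type*} [Field K] {n : ℕ} (α : MvPolynomial (Fin n) K) : Set (Fin n → K) :=
  {v | MvPolynomial.eval v α = 0}

/-- Pull back a polynomial along a linear embedding `ι : K^m → K^n`; for a linear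
form `α` this is the restriction of `α` to the image of `ι`, expressed in the
coordinates of `K^m`. -/
def restrictForm {K : Type*} [Field K] {m n : ℕ} (ι : (Fin m → K) →ₗ[K] (Fin n → K))
    (α : MvPolynomial (Fin n) K) : MvPolynomial (Fin m) K :=
  MvPolynomial.aeval
    (fun i : Fin n => ∑ j : Fin m, MvPolynomial.C (ι (Pi.single j 1) i) * MvPolynomial.X j) α

/-- `A''` is (a set of defining forms for) the restriction of the arrangement `A`
to the hyperplane `H₀ = ker α₀`, where `ι` is a linear parametrization of `H₀`:
the elements of `A''` are nonzero linear forms with pairwise distinct kernels,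
whose kernels are exactly the intersections `H ∩ H₀` for `H ∈ A \ {H₀}`. -/
def IsRestriction {K : Type*} [Field K] {m n : ℕ} (A : Finset (MvPolynomial (Fin n) K))
    (α₀ : MvPolynomial (Fin n) K) (ι : (Fin m → K) →ₗ[K] (Fin n → K))
    (A'' : Finset (MvPolynomial (Fin m) K)) : Prop :=
  (∀ β ∈ A'', β.IsHomogeneous 1 ∧ β ≠ 0) ∧
  (∀ β₁ ∈ A'', ∀ β₂ ∈ A'', kerV β₁ = kerV β₂ → β₁ = β₂) ∧
  (∀ α ∈ A, α ≠ α₀ → ∃ β ∈ A'', kerV β = kerV (restrictForm ι α)) ∧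
  (∀ β ∈ A'', ∃ α ∈ A, α ≠ α₀ ∧ kerV β = kerV (restrictForm ι α))

/-- Ziegler's canonical multiplicity: for a hyperplane `Y = ker β` of the
restriction, `κ(Y) = |A_Y| - 1`, the number of hyperplanes of `A` (other than
`H₀`) lying above `Y`. -/
def zieglerMult {K : Type*} [Field K] {m n : ℕ} (A : Finset (MvPolynomial (Fin n) K))
    (ι : (Fin m → K) →ₗ[K] (Fin n → K)) (β : MvPolynomial (Fin m) K) : ℕ :=
  ({α : MvPolynomial (Fin n) K |
      α ∈ A ∧ ∀ w ∈ kerV β, MvPolynomial.eval (ι w) α = 0}).ncard - 1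

end

/-! Saito's criterion. The gradient of a linear form `α` is a constant vector with a unit entry,
and a matrix whose rows lie in `D(A, μ)` maps it to `(θ_i α)_i`, whose entries are divisible by
`α ^ μ α`; hence `α ^ μ α` divides the determinant. The forms are pairwise coprime irreducibles,
so `Q = ∏ α ^ μ α` divides it too. For the rows `θ_i` the determinant is nonzero by independence
and homogeneous of degree `|μ| = deg Q`, so it is a unit multiple of `Q`. Cramer's rule writes any
`θ' ∈ D(A, μ)` in terms of the `θ_i` with coefficients `det(θ with θ_j replaced by θ') / det θ`,
which are polynomials because `Q` divides the numerators. -/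

namespace Matrix

variable {R ι : Type*} [CommRing R] [Fintype ι] [DecidableEq ι]

theorem dvd_det_of_dvd_mulVec (N : Matrix ι ι R) {v : ι → R} {j : ι} (hv : IsUnit (v j))
    {a : R} (h : ∀ i, a ∣ (N *ᵥ v) i) : a ∣ N.det := by
  have hdet : N.det * v j = (N.adjugate *ᵥ (N *ᵥ v)) j := by
    rw [mulVec_mulVec, adjugate_mul, smul_mulVec, one_mulVec, Pi.smul_apply, smul_eq_mul]
  rw [← hv.dvd_mul_right, hdet]
  exact Finset.dvd_sum fun i _ => dvd_mul_of_dvd_right (h i) _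

theorem mem_span_range_of_det_dvd_det_updateRow [IsDomain R] (M : Matrix ι ι R)
    (hM : M.det ≠ 0) {b : ι → R} (h : ∀ j, M.det ∣ (M.updateRow j b).det) :
    b ∈ Submodule.span R (Set.range M) := by
  choose g hg using h
  have hcramer : cramer Mᵀ b = M.det • g := funext fun j => by
    rw [cramer_transpose_apply, hg j, Pi.smul_apply, smul_eq_mul]
  have hsolve : Mᵀ *ᵥ g = b := by
    apply smul_right_injective _ hM
    have := mulVec_cramer Mᵀ b
    rwa [hcramer, mulVec_smul, det_transpose] at this
  rw [mulVec_transpose, vecMul_eq_sum] at hsolve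
  exact Submodule.mem_span_range_iff_exists_fun R |>.mpr ⟨g, hsolve⟩

theorem det_isHomogeneous {σ : Type*} (N : Matrix ι ι (MvPolynomial σ R))
    {d : ι → ℕ} (h : ∀ i j, (N i j).IsHomogeneous (d i)) :
    N.det.IsHomogeneous (∑ i, d i) := by
  rw [det_apply]
  refine MvPolynomial.IsHomogeneous.sum _ _ _ fun τ _ => ?_
  have hprod : (∏ i, N (τ i) i).IsHomogeneous (∑ i, d i) := by
    rw [← Equiv.sum_comp τ d]
    exact .prod _ _ _ fun i _ => h _ _
  rcases Int.units_eq_one_or (Equiv.Perm.sign τ) with hs | hs <;> rw [hs]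
  · simpa using hprod
  · simpa [Units.smul_def] using hprod.neg

end Matrix

namespace MvPolynomial

variable {σ K : Type*} [Field K] {p q : MvPolynomial σ K} {m : ℕ}

theorem IsHomogeneous.associated_of_dvd (hp : p.IsHomogeneous m) (hq : q.IsHomogeneous m)
    (hq0 : q ≠ 0) (hpq : p ∣ q) : Associated p q := by
  obtain ⟨r, rfl⟩ := hpq
  have hp0 : p ≠ 0 := left_ne_zero_of_mul hq0
  have hr0 : r ≠ 0 := right_ne_zero_of_mul hq0
  have hr : r.totalDegree = 0 := by
    have := hq.totalDegree hq0
    rw [totalDegree_mul_of_isDomain hp0 hr0, hp.totalDegree hp0] at this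
    omega
  rw [totalDegree_eq_zero_iff_eq_C] at hr
  refine ⟨(isUnit_iff_eq_C_of_isReduced.mpr ⟨_, ?_, hr⟩).unit, rfl⟩
  exact isUnit_iff_ne_zero.mpr fun h => hr0 (by rw [hr, h, C_0])

theorem IsHomogeneous.irreducible (hp : p.IsHomogeneous 1) (hp0 : p ≠ 0) : Irreducible p := by
  refine irreducible_of_totalDegree_eq_one (hp.totalDegree hp0) fun x hx => ?_
  obtain ⟨a, ha⟩ := exists_coeff_ne_zero hp0
  exact isUnit_iff_ne_zero.mpr fun hx0 => ha (zero_dvd_iff.mp (hx0 ▸ hx a))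

theorem isRelPrime_of_isHomogeneous_one {α β : MvPolynomial σ K}
    (hα : α.IsHomogeneous 1 ∧ α ≠ 0) (hβ : β.IsHomogeneous 1 ∧ β ≠ 0)
    (hdist : ∀ c : K, β ≠ C c * α) : IsRelPrime α β := by
  have hαirr := hα.1.irreducible hα.2
  refine hαirr.isRelPrime_iff_not_dvd.mpr fun hdvd => ?_
  obtain ⟨u, hu⟩ := hαirr.associated_of_dvd (hβ.1.irreducible hβ.2) hdvd
  obtain ⟨c, -, hc⟩ := isUnit_iff_eq_C_of_isReduced.mp u.isUnit
  exact hdist c (by rw [← hu, hc, mul_comm])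

theorem IsHomogeneous.exists_isUnit_pderiv [Fintype σ] (hp : p.IsHomogeneous 1) (hp0 : p ≠ 0) :
    ∃ j, IsUnit (pderiv j p) := by
  obtain ⟨j, -, hj⟩ : ∃ j ∈ Finset.univ, X j * pderiv j p ≠ 0 := by
    by_contra! h
    have euler := hp.sum_X_mul_pderiv
    rw [Finset.sum_eq_zero h, one_smul] at euler
    exact hp0 euler.symm
  have hj0 : pderiv j p ≠ 0 := right_ne_zero_of_mul hj
  have hdeg : (pderiv j p).totalDegree = 0 := hp.pderiv.totalDegree hj0
  refine ⟨j, isUnit_iff_totalDegree_of_isReduced.mpr ⟨isUnit_iff_ne_zero.mpr fun h => hj0 ?_, hdeg⟩⟩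
  rw [totalDegree_eq_zero_iff_eq_C.mp hdeg, h, C_0]

end MvPolynomial

section Saito

variable {K : Type*} [Field K] {n : ℕ} {A : Finset (MvPolynomial (Fin n) K)}
  {μ : MvPolynomial (Fin n) K → ℕ}

theorem mem_Dmod_iff {θ : MvDer n K} :
    θ ∈ Dmod A μ ↔ ∀ α ∈ A, α ^ μ α ∣ derAppL α θ := by
  simp only [Dmod, Submodule.mem_iInf, Submodule.mem_comap, Ideal.mem_span_singleton]

theorem pow_dvd_det_of_mem_Dmod {N : Matrix (Fin n) (Fin n) (MvPolynomial (Fin n) K)}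
    (hN : ∀ i, N i ∈ Dmod A μ) {α : MvPolynomial (Fin n) K} (hα : α ∈ A)
    (h1 : α.IsHomogeneous 1) (h0 : α ≠ 0) : α ^ μ α ∣ N.det := by
  obtain ⟨j, hj⟩ := h1.exists_isUnit_pderiv h0
  exact N.dvd_det_of_dvd_mulVec (v := fun j => pderiv j α) hj fun i =>
    mem_Dmod_iff.mp (hN i) α hα

theorem prod_pow_dvd_det_of_mem_Dmod (hforms : ∀ α ∈ A, α.IsHomogeneous 1 ∧ α ≠ 0)
    (hdist : ∀ α ∈ A, ∀ β ∈ A, α ≠ β → ∀ c : K, α ≠ C c * β)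
    {N : Matrix (Fin n) (Fin n) (MvPolynomial (Fin n) K)} (hN : ∀ i, N i ∈ Dmod A μ) :
    ∏ α ∈ A, α ^ μ α ∣ N.det := by
  refine Finset.prod_dvd_of_isRelPrime (fun α hα β hβ hne => ?_) fun α hα =>
    pow_dvd_det_of_mem_Dmod hN hα (hforms α hα).1 (hforms α hα).2
  exact (isRelPrime_of_isHomogeneous_one (hforms α hα) (hforms β hβ)
    (hdist β hβ α hα (Ne.symm hne))).pow

end Saito

/-- (Homogeneous form of Ziegler–Saito.) If `θ_1, ..., θ_ℓ ∈ D(A, μ)` are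
homogeneous, independent over `S`, and their polynomial degrees sum to
`|μ| = ∑ μ(H)`, then they form a basis of `D(A, μ)`; in particular `(A, μ)`
is free with these exponents. -/
theorem ziegler_saito_homogeneous
    {K : Type*} [Field K] {n : ℕ}
    (A : Finset (MvPolynomial (Fin n) K))
    (hforms : ∀ α ∈ A, α.IsHomogeneous 1 ∧ α ≠ 0)
    (hdist : ∀ α ∈ A, ∀ β ∈ A, α ≠ β → ∀ c : K, α ≠ MvPolynomial.C c * β)
    (μ : MvPolynomial (Fin n) K → ℕ)
    (θ : Fin n → MvDer n K) (d : Fin n → ℕ)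
    (hθ : ∀ i, θ i ∈ Dmod A μ)
    (hhom : ∀ i, IsHomogDer (θ i) (d i))
    (hind : LinearIndependent (MvPolynomial (Fin n) K) θ)
    (hdeg : ∑ i, d i = ∑ α ∈ A, μ α) :
    IsBasisOf θ (Dmod A μ) ∧ FreeWithExps (Dmod A μ) d := by
  let M : Matrix (Fin n) (Fin n) (MvPolynomial (Fin n) K) := Matrix.of θ
  have hM0 : M.det ≠ 0 :=
    Matrix.nonsingular_iff_det_ne_zero.mp (Matrix.Nonsingular.of_linearIndependent_row hind)
  have hQ : (∏ α ∈ A, α ^ μ α).IsHomogeneous (∑ α ∈ A, μ α) :=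
    .prod _ _ _ fun α hα => by simpa using (hforms α hα).1.pow (μ α)
  have hassoc : Associated (∏ α ∈ A, α ^ μ α) M.det :=
    hQ.associated_of_dvd (hdeg ▸ M.det_isHomogeneous hhom) hM0
      (prod_pow_dvd_det_of_mem_Dmod hforms hdist hθ)
  have hspan : Dmod A μ ≤ Submodule.span _ (Set.range θ) := fun θ' hθ' =>
    M.mem_span_range_of_det_dvd_det_updateRow hM0 fun j =>
      hassoc.dvd_iff_dvd_left.mp <| prod_pow_dvd_det_of_mem_Dmod hforms hdist fun i => by
        rcases eq_or_ne i j with rfl | hij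
        · rwa [Matrix.updateRow_self]
        · rw [Matrix.updateRow_ne hij]
          exact hθ i
  have hbasis : IsBasisOf θ (Dmod A μ) :=
    ⟨hθ, hind, le_antisymm (Submodule.span_le.mpr (Set.range_subset_iff.mpr hθ)) hspan⟩
  exact ⟨hbasis, θ, hbasis, hhom⟩
end

section
/- Let A be the reflection arrangement of the full monomial group G(r,1,ℓ) in ℂ^ℓ, i.e. the arrangement with defining polynomial x_1 ⋯ x_ℓ · ∏_{i<j} ∏_{k=0}^{r−1} (x_i − ζ^k x_j), where ζ is a primitive r-th root of unity. Then A is free with exponents {1, r+1, 2r+1, ..., (ℓ−1)r+1}. -/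
open MvPolynomial

open scoped Classical

/-!
The derivations `θ_p = ∑ᵢ xᵢ^(p r + 1) ∂ᵢ` lie in `D(A)`, because `xᵢ - ζᵏ xⱼ` divides
`xᵢ^(p r + 1) - ζᵏ xⱼ^(p r + 1) = xᵢ^(p r + 1) - (ζᵏ xⱼ)^(p r + 1)`. Their coefficient matrix `M` is
the Vandermonde matrix of the `xᵢ^r` times `diag(xᵢ)`, so its determinant
`∏ᵢ xᵢ · ∏_{i<j} (xⱼ^r - xᵢ^r)` agrees up to sign with the defining polynomial
`∏ᵢ xᵢ · ∏_{i<j} ∏ₖ (xᵢ - ζᵏ xⱼ)` of `A`. Saito's criterion then makes the `θ_p` a basis: by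
Cramer's rule any `θ ∈ D(A)` is `∑ₚ (det Mₚ / det M) θ_p`, where `Mₚ` is `M` with row `p`
replaced by `θ`; each `α ∈ A` divides `det Mₚ`, since the column combination
`∑ᵢ (∂ᵢ α) · (column i)` is `(θ_q(α))_q`, so the product of these pairwise non-associated
primes, which is `det M` up to a unit, divides `det Mₚ`.
-/

theorem Finset.prod_dvd_of_prime_of_pairwise_not_associated {M : Type*} [CommMonoidWithZero M]
    [IsCancelMulZero M] {s : Finset M} (hprime : ∀ a ∈ s, Prime a)
    (hdistinct : (s : Set M).Pairwise fun a b => ¬Associated a b) {z : M}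
    (hdvd : ∀ a ∈ s, a ∣ z) : ∏ a ∈ s, a ∣ z := by
  classical
  rw [Finset.prod_eq_multiset_prod, Multiset.map_id']
  refine Multiset.prod_primes_dvd z hprime hdvd fun a => ?_
  rw [Multiset.countP_eq_card_filter, ← Finset.filter_val, Finset.card_val, Finset.card_le_one]
  intro b hb c hc
  rw [Finset.mem_filter] at hb hc
  by_contra hbc
  exact hdistinct hb.1 hc.1 hbc (hb.2.symm.trans hc.2)

theorem IsPrimitiveRoot.pow_sub_pow_eq_prod_range {R : Type*} [CommRing R] [IsDomain R]
    {ζ : R} {r : ℕ} (hζ : IsPrimitiveRoot ζ r) (hr : 0 < r) (x y : R) :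
    x ^ r - y ^ r = ∏ k ∈ Finset.range r, (x - ζ ^ k * y) := by
  simpa [Polynomial.eval_prod] using
    congrArg (Polynomial.eval x) (X_pow_sub_C_eq_prod hζ hr (rfl : y ^ r = y ^ r))

namespace Matrix

theorem mem_span_rows_of_det_dvd_det_updateRow {R : Type*} [CommRing R] [IsDomain R]
    {m : Type*} [Fintype m] [DecidableEq m] {M : Matrix m m R} (hM : M.det ≠ 0) {v : m → R}
    (hdvd : ∀ p, M.det ∣ (M.updateRow p v).det) : v ∈ Submodule.span R (Set.range M) := by
  choose f hf using hdvd
  have hcramer : Mᵀ.cramer v = M.det • f := by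
    funext p
    rw [cramer_transpose_apply, hf p, Pi.smul_apply, smul_eq_mul]
  refine (Submodule.mem_span_range_iff_exists_fun R).mpr ⟨f, ?_⟩
  apply smul_right_injective (m → R) hM
  dsimp only
  rw [← vecMul_eq_sum, ← mulVec_transpose, ← mulVec_smul, ← hcramer, mulVec_cramer,
    det_transpose]

theorem det_of_pow_mul_add_one {R : Type*} [CommRing R] {ℓ : ℕ} (v : Fin ℓ → R) (r : ℕ) :
    (of fun p i : Fin ℓ => v i ^ ((p : ℕ) * r + 1)).det
      = (∏ i, ∏ j ∈ Finset.Ioi i, (v j ^ r - v i ^ r)) * ∏ i, v i := by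
  have : (of fun p i : Fin ℓ => v i ^ ((p : ℕ) * r + 1))
      = (vandermonde fun i => v i ^ r)ᵀ * diagonal v := by
    ext p i
    simp [mul_diagonal, vandermonde, pow_succ, pow_mul, pow_right_comm _ r]
  rw [this, det_mul, det_transpose, det_vandermonde, det_diagonal]

end Matrix

section LinearForms

variable {σ R : Type*} [CommRing R]

theorem prime_X_sub_C_mul_X [IsDomain R] {a b : σ} (hab : a ≠ b) (u : R) :
    Prime (X a - C u * X b : MvPolynomial σ R) := by
  classical
  let shear (c : R) : MvPolynomial σ R →ₐ[R] MvPolynomial σ R :=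
    aeval (Function.update X a (X a + C c * X b))
  have shear_comp (c c' : R) : (shear c).comp (shear c') = shear (c + c') := by
    refine algHom_ext fun i => ?_
    rcases eq_or_ne i a with rfl | hi
    · simp [shear, hab.symm, add_mul, add_assoc]
    · simp [shear, hi]
  have shear_zero : shear 0 = AlgHom.id R _ := algHom_ext fun i => by
    rcases eq_or_ne i a with rfl | hi <;> simp [shear, *]
  let e : MvPolynomial σ R ≃ₐ[R] MvPolynomial σ R :=
    AlgEquiv.ofAlgHom (shear u) (shear (-u)) (by rw [shear_comp, add_neg_cancel, shear_zero])
      (by rw [shear_comp, neg_add_cancel, shear_zero])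
  have he : e (X a - C u * X b) = X a := by
    simp [e, shear, hab.symm]
  refine (MulEquiv.prime_iff e).mp ?_
  rw [he]
  exact X_prime

variable [LinearOrder σ]

/-- For a linear form `α`: the first variable occurring in `α` is `X a`, with coefficient `1`. -/
def IsMonicAt (α : MvPolynomial σ R) (a : σ) : Prop :=
  pderiv a α = 1 ∧ ∀ t < a, pderiv t α = 0

theorem isMonicAt_X [Nontrivial R] (a : σ) : IsMonicAt (X a : MvPolynomial σ R) a :=
  ⟨by simp, fun t ht => by simp [pderiv_X, ht.ne]⟩

theorem isMonicAt_X_sub_C_mul_X {a b : σ} (hab : a < b) (u : R) :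
    IsMonicAt (X a - C u * X b : MvPolynomial σ R) a :=
  ⟨by simp [pderiv_X, hab.ne'], fun t ht => by simp [pderiv_X, ht.ne, (ht.trans hab).ne]⟩

theorem IsMonicAt.unique [Nontrivial R] {α : MvPolynomial σ R} {a b : σ} (ha : IsMonicAt α a)
    (hb : IsMonicAt α b) : a = b := by
  by_contra hab
  rcases lt_or_gt_of_ne hab with hab | hab
  · exact one_ne_zero (ha.1.symm.trans (hb.2 a hab))
  · exact one_ne_zero (hb.1.symm.trans (ha.2 b hab))

theorem IsMonicAt.eq_of_associated [IsDomain R] {α β : MvPolynomial σ R} {a b : σ}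
    (ha : IsMonicAt α a) (hb : IsMonicAt β b) (h : Associated α β) : α = β := by
  obtain ⟨u, rfl⟩ := h
  obtain ⟨c, -, hc⟩ := isUnit_iff_eq_C_of_isReduced.mp u.isUnit
  have hder (t : σ) : pderiv t (α * (u : MvPolynomial σ R)) = pderiv t α * C c := by
    rw [hc, Derivation.leibniz, pderiv_C, smul_zero, zero_add, smul_eq_mul, mul_comm]
  have hab : a = b := by
    rcases lt_trichotomy a b with hab | hab | hab
    · have hc0 : (C c : MvPolynomial σ R) = 0 := by simpa [hder, ha.1] using hb.2 a hab
      simpa [hder, hc0] using hb.1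
    · exact hab
    · simpa [hder, ha.2 b hab] using hb.1
  subst hab
  have hc1 : (C c : MvPolynomial σ R) = 1 := by simpa [hder, ha.1] using hb.1
  rw [hc, hc1, mul_one]

theorem X_ne_X_sub_C_mul_X [Nontrivial R] {i a b : σ} (hab : a < b) {u : R} (hu : u ≠ 0) :
    (X i : MvPolynomial σ R) ≠ X a - C u * X b := by
  intro h
  obtain rfl : i = a := (isMonicAt_X i).unique (h ▸ isMonicAt_X_sub_C_mul_X hab u)
  rw [eq_comm, sub_eq_self, C_mul_X_eq_monomial, monomial_eq_zero] at h
  exact hu h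

theorem X_sub_C_mul_X_inj [Nontrivial R] {a b a' b' : σ} (hab : a < b) (hab' : a' < b')
    {u u' : R} (hu : u ≠ 0) (h : (X a - C u * X b : MvPolynomial σ R) = X a' - C u' * X b') :
    a = a' ∧ b = b' ∧ u = u' := by
  obtain rfl : a = a' :=
    (isMonicAt_X_sub_C_mul_X hab u).unique (h ▸ isMonicAt_X_sub_C_mul_X hab' u')
  rw [sub_right_inj, C_mul_X_eq_monomial, C_mul_X_eq_monomial, monomial_eq_monomial_iff] at h
  rcases h with ⟨hb, rfl⟩ | ⟨hu0, -⟩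
  · exact ⟨rfl, Finsupp.single_left_injective one_ne_zero hb, rfl⟩
  · exact absurd hu0 hu

end LinearForms

section Saito

variable {K : Type*} [Field K] {n : ℕ}

theorem derAppL_apply (f : MvPolynomial (Fin n) K) (θ : MvDer n K) :
    derAppL f θ = ∑ i, θ i * pderiv i f := rfl

theorem derAppL_X (i : Fin n) (θ : MvDer n K) : derAppL (X i) θ = θ i := by
  simp [derAppL_apply, pderiv_X, Pi.single_apply]

theorem derAppL_X_sub_C_mul_X (a b : Fin n) (u : K) (θ : MvDer n K) :
    derAppL (X a - C u * X b) θ = θ a - C u * θ b := by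
  simp [derAppL_apply, pderiv_X, Pi.single_apply, mul_sub, Finset.sum_sub_distrib, mul_comm]

theorem mem_Dmod_one_iff {A : Finset (MvPolynomial (Fin n) K)} {θ : MvDer n K} :
    θ ∈ Dmod A (fun _ => 1) ↔ ∀ α ∈ A, α ∣ derAppL α θ := by
  simp only [Dmod, Submodule.mem_iInf, Submodule.mem_comap, pow_one, Ideal.mem_span_singleton]

theorem dvd_det_of_dvd_derAppL {α : MvPolynomial (Fin n) K} (hα : Prime α) {i : Fin n}
    (hi : IsUnit (pderiv i α)) (N : Matrix (Fin n) (Fin n) (MvPolynomial (Fin n) K))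
    (hN : ∀ q, α ∣ derAppL α (N q)) : α ∣ N.det := by
  choose w hw using hN
  have hcol : (fun q => ∑ j, pderiv j α • N q j) = α • w := by
    funext q
    simp only [smul_eq_mul, Pi.smul_apply, ← hw, derAppL_apply, mul_comm]
  have hdet := Matrix.det_updateCol_sum N i fun j => pderiv j α
  rw [hcol, Matrix.det_updateCol_smul, smul_eq_mul] at hdet
  exact (hα.dvd_or_dvd ⟨_, hdet.symm⟩).resolve_left
    fun h => hα.not_isUnit (isUnit_of_dvd_unit h hi)

variable {A : Finset (MvPolynomial (Fin n) K)}

theorem prod_dvd_det_of_mem_Dmod (hprime : ∀ α ∈ A, Prime α)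
    (hdistinct : (A : Set (MvPolynomial (Fin n) K)).Pairwise fun α β => ¬Associated α β)
    (hunit : ∀ α ∈ A, ∃ i, IsUnit (pderiv i α))
    (N : Matrix (Fin n) (Fin n) (MvPolynomial (Fin n) K))
    (hN : ∀ q, N q ∈ Dmod A (fun _ => 1)) : ∏ α ∈ A, α ∣ N.det :=
  Finset.prod_dvd_of_prime_of_pairwise_not_associated hprime hdistinct fun α hα =>
    have ⟨_, hi⟩ := hunit α hα
    dvd_det_of_dvd_derAppL (hprime α hα) hi N fun q => mem_Dmod_one_iff.mp (hN q) α hα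

theorem isBasisOf_Dmod_of_associated_det (hprime : ∀ α ∈ A, Prime α)
    (hdistinct : (A : Set (MvPolynomial (Fin n) K)).Pairwise fun α β => ¬Associated α β)
    (hunit : ∀ α ∈ A, ∃ i, IsUnit (pderiv i α)) {θ : Fin n → MvDer n K}
    (hθ : ∀ p, θ p ∈ Dmod A (fun _ => 1)) (hdet : Associated (Matrix.of θ).det (∏ α ∈ A, α)) :
    IsBasisOf θ (Dmod A fun _ => 1) := by
  have hne : (Matrix.of θ).det ≠ 0 :=
    hdet.ne_zero_iff.mpr (Finset.prod_ne_zero_iff.mpr fun α hα => (hprime α hα).ne_zero)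
  refine ⟨hθ, Matrix.linearIndependent_rows_of_det_ne_zero hne, le_antisymm ?_ fun θ' hθ' => ?_⟩
  · exact Submodule.span_le.mpr (Set.range_subset_iff.mpr hθ)
  · refine Matrix.mem_span_rows_of_det_dvd_det_updateRow hne fun p => ?_
    refine hdet.dvd.trans (prod_dvd_det_of_mem_Dmod hprime hdistinct hunit _ fun q => ?_)
    rcases eq_or_ne q p with rfl | hqp
    · rwa [Matrix.updateRow_self]
    · rw [Matrix.updateRow_ne hqp]
      exact hθ q

theorem isBasisOf_Dmod_of_isMonicAt (hprime : ∀ α ∈ A, Prime α)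
    (hmonic : ∀ α ∈ A, ∃ a, IsMonicAt α a) {θ : Fin n → MvDer n K}
    (hθ : ∀ p, θ p ∈ Dmod A (fun _ => 1)) (hdet : Associated (Matrix.of θ).det (∏ α ∈ A, α)) :
    IsBasisOf θ (Dmod A fun _ => 1) := by
  refine isBasisOf_Dmod_of_associated_det hprime (fun α hα β hβ hne h => ?_) (fun α hα => ?_)
    hθ hdet
  · obtain ⟨a, ha⟩ := hmonic α hα
    obtain ⟨b, hb⟩ := hmonic β hβ
    exact hne (ha.eq_of_associated hb h)
  · obtain ⟨a, ha⟩ := hmonic α hα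
    exact ⟨a, ha.1 ▸ isUnit_one⟩

end Saito

section MonomialArrangement

noncomputable def monomialArrangement {K : Type*} [Field K] (ℓ r : ℕ) (ζ : K) :
    Finset (MvPolynomial (Fin ℓ) K) :=
  (Finset.univ.image fun i : Fin ℓ => (X i : MvPolynomial (Fin ℓ) K)) ∪
    ((((Finset.univ : Finset (Fin ℓ × Fin ℓ)).filter fun p => p.1 < p.2) ×ˢ
        Finset.range r).image fun q => X q.1.1 - C (ζ ^ q.2) * X q.1.2)

noncomputable def monomialDer {K : Type*} [Field K] (ℓ r : ℕ) : Fin ℓ → MvDer ℓ K :=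
  fun p i => X i ^ ((p : ℕ) * r + 1)

variable {K : Type*} [Field K] {ℓ r : ℕ} {ζ : K}

theorem forall_mem_monomialArrangement {P : MvPolynomial (Fin ℓ) K → Prop} :
    (∀ α ∈ monomialArrangement ℓ r ζ, P α) ↔
      (∀ i, P (X i)) ∧ ∀ a b k, a < b → k < r → P (X a - C (ζ ^ k) * X b) := by
  simp only [monomialArrangement, Finset.forall_mem_union, Finset.forall_mem_image,
    Finset.mem_univ, forall_const, Finset.mem_product, Finset.mem_filter, Finset.mem_range,
    true_and, Prod.forall, and_imp]

theorem prime_of_mem_monomialArrangement : ∀ α ∈ monomialArrangement ℓ r ζ, Prime α :=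
  forall_mem_monomialArrangement.mpr
    ⟨fun _ => X_prime, fun _ _ _ hab _ => prime_X_sub_C_mul_X hab.ne _⟩

theorem exists_isMonicAt_of_mem_monomialArrangement :
    ∀ α ∈ monomialArrangement ℓ r ζ, ∃ a, IsMonicAt α a :=
  forall_mem_monomialArrangement.mpr
    ⟨fun i => ⟨i, isMonicAt_X i⟩, fun a _ _ hab _ => ⟨a, isMonicAt_X_sub_C_mul_X hab _⟩⟩

theorem monomialDer_mem_Dmod (hζ : IsPrimitiveRoot ζ r) (p : Fin ℓ) :
    monomialDer ℓ r p ∈ Dmod (monomialArrangement ℓ r ζ) fun _ => 1 := by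
  rw [mem_Dmod_one_iff, forall_mem_monomialArrangement]
  refine ⟨fun i => ?_, fun a b k _ _ => ?_⟩
  · rw [derAppL_X]
    exact dvd_pow_self _ (Nat.succ_ne_zero _)
  · have hroot : (ζ ^ k) ^ ((p : ℕ) * r + 1) = ζ ^ k := by
      rw [pow_succ, mul_comm (p : ℕ) r, pow_mul, pow_right_comm ζ k r, hζ.pow_eq_one, one_pow,
        one_pow, one_mul]
    have hdvd := sub_dvd_pow_sub_pow (X a) (C (ζ ^ k) * X b) ((p : ℕ) * r + 1)
    rw [mul_pow, ← C_pow, hroot] at hdvd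
    rw [derAppL_X_sub_C_mul_X]
    exact hdvd

theorem prod_monomialArrangement (hζ : IsPrimitiveRoot ζ r) (hr : 0 < r) :
    ∏ α ∈ monomialArrangement ℓ r ζ, α
      = (∏ i, X i) * ∏ i, ∏ j ∈ Finset.Ioi i, (X i ^ r - X j ^ r) := by
  have hζk (k : ℕ) : ζ ^ k ≠ 0 := pow_ne_zero _ (hζ.ne_zero hr.ne')
  have hCζ : IsPrimitiveRoot (C ζ : MvPolynomial (Fin ℓ) K) r :=
    hζ.map_of_injective (C_injective _ _)
  have hdisj : Disjoint (Finset.univ.image fun i : Fin ℓ => (X i : MvPolynomial (Fin ℓ) K))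
      ((((Finset.univ : Finset (Fin ℓ × Fin ℓ)).filter fun p => p.1 < p.2) ×ˢ
        Finset.range r).image fun q => X q.1.1 - C (ζ ^ q.2) * X q.1.2) := by
    simp only [Finset.disjoint_left, Finset.mem_image, Finset.mem_univ, true_and,
      Finset.mem_product, Finset.mem_filter, not_exists, not_and]
    rintro _ ⟨i, rfl⟩ ⟨⟨a, b⟩, k⟩ ⟨hab, -⟩
    exact (X_ne_X_sub_C_mul_X hab (hζk k)).symm
  rw [monomialArrangement, Finset.prod_union hdisj, Finset.prod_image fun i _ j _ h =>
    X_injective h, Finset.prod_image, Finset.prod_product]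
  · congr 1
    refine (Finset.prod_congr rfl fun p _ => ?_).trans
      (Finset.prod_finset_product' _ _ _ fun p => by simp)
    rw [hCζ.pow_sub_pow_eq_prod_range hr]
    simp only [map_pow]
  · rintro ⟨⟨a, b⟩, k⟩ hq ⟨⟨a', b'⟩, k'⟩ hq' h
    simp only [Finset.coe_product, Set.mem_prod, Finset.coe_filter, Finset.mem_univ, true_and,
      Set.mem_ofPred_eq, Finset.coe_range, Set.mem_Iio] at hq hq'
    obtain ⟨rfl, rfl, hkk⟩ := X_sub_C_mul_X_inj hq.1 hq'.1 (hζk k) h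
    rw [hζ.pow_inj hq.2 hq'.2 hkk]

theorem associated_det_monomialDer (hζ : IsPrimitiveRoot ζ r) (hr : 0 < r) :
    Associated (Matrix.of (monomialDer ℓ r)).det (∏ α ∈ monomialArrangement ℓ r ζ, α) := by
  have hdet : (Matrix.of (monomialDer ℓ r)).det
      = (∏ i, ∏ j ∈ Finset.Ioi i, (X j ^ r - X i ^ r)) * ∏ i, (X i : MvPolynomial (Fin ℓ) K) :=
    Matrix.det_of_pow_mul_add_one (fun i => X i) r
  rw [hdet, prod_monomialArrangement hζ hr, mul_comm]
  refine .mul_left _ (.prod _ _ _ fun i _ => .prod _ _ _ fun j _ => ?_)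
  exact ⟨-1, by rw [Units.val_neg, Units.val_one, mul_neg_one, neg_sub]⟩

end MonomialArrangement

/-- The reflection arrangement of the full monomial group `G(r,1,ℓ)` in `ℂ^ℓ`,
with hyperplanes `ker x_i` and `ker (x_i - ζ^k x_j)` for `i < j`, `0 ≤ k < r`,
is free with exponents `{1, r+1, 2r+1, ..., (ℓ-1)r+1}`. -/
theorem monomial_reflection_arrangement_free
    (ℓ r : ℕ) (hr : 1 ≤ r) (ζ : ℂ) (hζ : IsPrimitiveRoot ζ r)
    (A : Finset (MvPolynomial (Fin ℓ) ℂ))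
    (hA : A =
      (Finset.univ.image fun i : Fin ℓ => (MvPolynomial.X i : MvPolynomial (Fin ℓ) ℂ)) ∪
      ((((Finset.univ : Finset (Fin ℓ × Fin ℓ)).filter fun p => p.1 < p.2) ×ˢ
          Finset.range r).image fun q =>
        MvPolynomial.X q.1.1 - MvPolynomial.C (ζ ^ q.2) * MvPolynomial.X q.1.2)) :
    FreeWithExps (Dmod A fun _ => 1) (fun i : Fin ℓ => (i : ℕ) * r + 1) := by
  subst hA
  refine ⟨monomialDer ℓ r, ?_, fun p i => isHomogeneous_X_pow i _⟩
  exact isBasisOf_Dmod_of_isMonicAt prime_of_mem_monomialArrangement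
    exists_isMonicAt_of_mem_monomialArrangement (monomialDer_mem_Dmod hζ)
    (associated_det_monomialDer hζ hr)
end

section
/- Let r ≥ 2 and consider the rank-2 multiarrangement in ℂ^2 (coordinates x_1, x_3) with defining polynomial Q = x_1^r ∏_{j=0}^{r−1} (x_1 − ζ^j x_3)^2 = x_1^r (x_1^r − x_3^r)^2, where ζ is a primitive r-th root of unity. Then the derivations θ_1 = r x_1^{r+1} ∂_1 + ((r+1) x_1^r x_3 − x_3^{r+1}) ∂_3 and θ_2 = x_1^{r−1}( r x_1 x_3^{r−1} ∂_1 + (x_1^r + (r−1) x_3^r) ∂_3 ) form a basis of the derivation module, so the multiarrangement is free with exponents {r+1, 2r−1}. -/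
open MvPolynomial

open scoped Classical

/-!
Saito's criterion in rank two, made explicit. For derivations `θ, θ'` of the multiarrangement
and a linear form `α = x₁ - c x₃`, the determinant of `(θ, θ')` equals
`θ(α) θ'₃ - θ₃ θ'(α)`, so it is divisible by `α^(μ α)`; since the forms are pairwise coprime
primes, it is divisible by `Q = x₁^r (x₁^r - x₃^r)²`. The determinant of the explicit pair
`(θ₁, θ₂)` is `r Q`, so Cramer's rule writes every derivation of the module as a polynomial
combination of `θ₁, θ₂`. That `θ₁, θ₂` lie in the module reduces, after the substitution
`y = c x₃` with `c^r = 1`, to the double root at `x = y` of `n x^(n+1) - (n+1) x^n y + y^(n+1)`.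
-/

open Finset

theorem sub_sq_dvd_mul_pow_succ_sub_add_pow_succ {R : Type*} [CommRing R] (x y : R) (n : ℕ) :
    (x - y) ^ 2 ∣ n * x ^ (n + 1) - (n + 1) * x ^ n * y + y ^ (n + 1) := by
  induction n with
  | zero => simp
  | succ n ih =>
    have step : ((n + 1 : ℕ) : R) * x ^ (n + 1 + 1) - ((n + 1 : ℕ) + 1) * x ^ (n + 1) * y +
          y ^ (n + 1 + 1) =
        x * (n * x ^ (n + 1) - (n + 1) * x ^ n * y + y ^ (n + 1)) +
          (x - y) * (x ^ (n + 1) - y ^ (n + 1)) := by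
      push_cast; ring
    rw [step]
    exact dvd_add (ih.mul_left x) (sq (x - y) ▸ mul_dvd_mul_left _ (sub_dvd_pow_sub_pow _ _ _))

noncomputable section

namespace RankTwo

variable {K : Type*} [Field K]

def derDet (θ θ' : MvDer 2 K) : MvPolynomial (Fin 2) K :=
  θ 0 * θ' 1 - θ 1 * θ' 0

theorem derDet_smul_eq (θ₁ θ₂ θ : MvDer 2 K) :
    derDet θ₁ θ₂ • θ = derDet θ θ₂ • θ₁ + derDet θ₁ θ • θ₂ := by
  refine funext (Fin.forall_fin_two.2 ⟨?_, ?_⟩) <;>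
    simp only [derDet, Pi.smul_apply, Pi.add_apply, smul_eq_mul] <;> ring

theorem linearIndependent_of_derDet_ne_zero {θ₁ θ₂ : MvDer 2 K} (h : derDet θ₁ θ₂ ≠ 0) :
    LinearIndependent (MvPolynomial (Fin 2) K) ![θ₁, θ₂] := by
  refine LinearIndependent.pair_iff.2 fun s t hst => ?_
  have h0 := congrFun hst 0
  have h1 := congrFun hst 1
  simp only [Pi.add_apply, Pi.smul_apply, smul_eq_mul, Pi.zero_apply] at h0 h1
  have hs : s * derDet θ₁ θ₂ = 0 := by
    unfold derDet; linear_combination θ₂ 1 * h0 - θ₂ 0 * h1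
  have ht : t * derDet θ₁ θ₂ = 0 := by
    unfold derDet; linear_combination θ₁ 0 * h1 - θ₁ 1 * h0
  exact ⟨(mul_eq_zero.1 hs).resolve_right h, (mul_eq_zero.1 ht).resolve_right h⟩

/-- Saito's criterion in rank two. -/
theorem isBasisOf_of_derDet_dvd {D : Submodule (MvPolynomial (Fin 2) K) (MvDer 2 K)}
    {θ₁ θ₂ : MvDer 2 K} (h₁ : θ₁ ∈ D) (h₂ : θ₂ ∈ D) (hdet : derDet θ₁ θ₂ ≠ 0)
    (hdvd : ∀ θ ∈ D, ∀ θ' ∈ D, derDet θ₁ θ₂ ∣ derDet θ θ') :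
    IsBasisOf ![θ₁, θ₂] D := by
  have hmem : ∀ i, ![θ₁, θ₂] i ∈ D := by
    intro i; fin_cases i
    exacts [h₁, h₂]
  refine ⟨hmem, linearIndependent_of_derDet_ne_zero hdet,
    le_antisymm (Submodule.span_le.2 (Set.range_subset_iff.2 hmem)) fun θ hθ => ?_⟩
  obtain ⟨f, hf⟩ := hdvd θ hθ θ₂ h₂
  obtain ⟨g, hg⟩ := hdvd θ₁ h₁ θ hθ
  have hθ_eq : θ = f • θ₁ + g • θ₂ := by
    refine smul_right_injective (MvDer 2 K) hdet ?_
    simp only [derDet_smul_eq θ₁ θ₂ θ, hf, hg, smul_add, mul_smul]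
  rw [Matrix.range_cons_cons_empty, hθ_eq]
  exact Submodule.mem_span_pair.2 ⟨f, g, rfl⟩

theorem mem_DmodP_iff {P : Finset (MvPolynomial (Fin 2) K × ℕ)} {θ : MvDer 2 K} :
    θ ∈ DmodP P ↔ ∀ p ∈ P, p.1 ^ p.2 ∣ derAppL p.1 θ := by
  simp only [DmodP, Submodule.mem_iInf, Submodule.mem_comap, Ideal.mem_span_singleton]

theorem derAppL_X_sub_C_mul_X (c : K) (θ : MvDer 2 K) :
    derAppL (X 0 - C c * X 1) θ = θ 0 - C c * θ 1 := by
  simp only [derAppL, LinearMap.coe_mk, AddHom.coe_mk, Fin.sum_univ_two, map_sub, pderiv_C_mul,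
    pderiv_X_self, pderiv_X_of_ne (show (0 : Fin 2) ≠ 1 by decide),
    pderiv_X_of_ne (show (1 : Fin 2) ≠ 0 by decide)]
  ring

theorem mem_DmodP_iff_dvd (ζ : K) (r m k : ℕ) {θ : MvDer 2 K} :
    θ ∈ DmodP ({(X 0, m)} ∪ (range r).image fun j => (X 0 - C (ζ ^ j) * X 1, k)) ↔
      X 0 ^ m ∣ θ 0 ∧ ∀ j < r, (X 0 - C (ζ ^ j) * X 1) ^ k ∣ θ 0 - C (ζ ^ j) * θ 1 := by
  have hθX : derAppL (X 0) θ = θ 0 := by simpa using derAppL_X_sub_C_mul_X 0 θ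
  simp only [mem_DmodP_iff, mem_union, mem_singleton, or_imp, forall_and, forall_eq,
    forall_mem_image, mem_range, hθX, derAppL_X_sub_C_mul_X]

theorem dvd_derDet_of_dvd_sub_C_mul (c : K) {q : MvPolynomial (Fin 2) K} {θ θ' : MvDer 2 K}
    (h : q ∣ θ 0 - C c * θ 1) (h' : q ∣ θ' 0 - C c * θ' 1) : q ∣ derDet θ θ' := by
  have hdet : derDet θ θ' = (θ 0 - C c * θ 1) * θ' 1 - θ 1 * (θ' 0 - C c * θ' 1) := by
    unfold derDet; ring
  rw [hdet]
  exact dvd_sub (h.mul_right _) (h'.mul_left _)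

theorem prime_X_sub_C_mul_X (c : K) : Prime (X 0 - C c * X 1 : MvPolynomial (Fin 2) K) := by
  rw [← MulEquiv.prime_iff (finSuccEquiv K 1).toMulEquiv]
  have h : finSuccEquiv K 1 (X 0 - C c * X 1) = Polynomial.X - Polynomial.C (C c * X 0) := by
    rw [map_sub, map_mul, show (1 : Fin 2) = Fin.succ 0 from rfl, finSuccEquiv_X_zero,
      finSuccEquiv_X_succ, ← algebraMap_eq, AlgEquiv.commutes, Polynomial.algebraMap_apply,
      algebraMap_eq, Polynomial.C_mul]
  exact h ▸ Polynomial.prime_X_sub_C _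

theorem isRelPrime_X_sub_C_mul_X {c c' : K} (h : c ≠ c') :
    IsRelPrime (X 0 - C c * X 1 : MvPolynomial (Fin 2) K) (X 0 - C c' * X 1) := by
  refine (prime_X_sub_C_mul_X c).irreducible.isRelPrime_iff_not_dvd.2 fun hdvd => ?_
  have := map_dvd (eval ![c, 1]) hdvd
  simp [sub_eq_zero, h] at this

theorem prod_X_sub_C_pow_mul_X {ζ : K} {r : ℕ} (hζ : IsPrimitiveRoot ζ r) (hr : 0 < r) :
    ∏ j ∈ range r, (X 0 - C (ζ ^ j) * X 1 : MvPolynomial (Fin 2) K) = X 0 ^ r - X 1 ^ r := by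
  have hC : IsPrimitiveRoot (C ζ : MvPolynomial (Fin 2) K) r :=
    hζ.map_of_injective (C_injective _ _)
  have : NeZero r := ⟨hr.ne'⟩
  rw [hC.pow_sub_pow_eq_prod_sub_mul _ _ hr]
  refine prod_nbij (C ζ ^ ·) (fun j _ => ?_) (fun i hi j hj hij => ?_) (fun μ hμ => ?_)
    fun j _ => by rw [C_pow]
  · rw [Polynomial.mem_nthRootsFinset hr, ← pow_mul, mul_comm, pow_mul, hC.pow_eq_one, one_pow]
  · exact hC.pow_inj (mem_range.1 hi) (mem_range.1 hj) hij
  · obtain ⟨j, hj, rfl⟩ := hC.eq_pow_of_pow_eq_one ((Polynomial.mem_nthRootsFinset hr _).1 hμ)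
    exact ⟨j, mem_coe.2 (mem_range.2 hj), rfl⟩

theorem X_pow_mul_pow_sub_pow_pow_dvd {ζ : K} {r m k : ℕ} (hζ : IsPrimitiveRoot ζ r) (hr : 0 < r)
    {p : MvPolynomial (Fin 2) K} (h₀ : X 0 ^ m ∣ p)
    (h : ∀ j < r, (X 0 - C (ζ ^ j) * X 1) ^ k ∣ p) :
    X 0 ^ m * (X 0 ^ r - X 1 ^ r) ^ k ∣ p := by
  rw [← prod_X_sub_C_pow_mul_X hζ hr, ← prod_pow]
  refine IsRelPrime.mul_dvd (IsRelPrime.prod_right fun j _ => ?_) h₀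
    (prod_dvd_of_isRelPrime (fun i hi j hj hij => ?_) fun j hj => h j (mem_range.1 hj))
  · have hne : (0 : K) ≠ ζ ^ j := (pow_ne_zero j (hζ.ne_zero hr.ne')).symm
    simpa using (isRelPrime_X_sub_C_mul_X hne).pow (m := m) (n := k)
  · exact (isRelPrime_X_sub_C_mul_X
      (mt (hζ.pow_inj (mem_range.1 hi) (mem_range.1 hj)) hij)).pow

def theta₁ (r : ℕ) : MvDer 2 K :=
  ![C (r : K) * X 0 ^ (r + 1), C ((r : K) + 1) * X 0 ^ r * X 1 - X 1 ^ (r + 1)]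

def theta₂ (r : ℕ) : MvDer 2 K :=
  ![X 0 ^ (r - 1) * (C (r : K) * X 0 * X 1 ^ (r - 1)),
    X 0 ^ (r - 1) * (X 0 ^ r + C ((r : K) - 1) * X 1 ^ r)]

theorem X_pow_dvd_theta₁ (r : ℕ) : X 0 ^ r ∣ theta₁ (K := K) r 0 :=
  ⟨C (r : K) * X 0, by simp only [theta₁, Matrix.cons_val_zero]; ring⟩

theorem X_pow_dvd_theta₂ {r : ℕ} (hr : 0 < r) : X 0 ^ r ∣ theta₂ (K := K) r 0 := by
  obtain ⟨n, rfl⟩ : ∃ n, r = n + 1 := ⟨r - 1, by omega⟩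
  refine ⟨C ((n + 1 : ℕ) : K) * X 1 ^ n, ?_⟩
  simp only [theta₂, Matrix.cons_val_zero, Nat.add_sub_cancel]
  ring

theorem sub_sq_dvd_theta₁ {r : ℕ} {c : K} (hc : c ^ r = 1) :
    (X 0 - C c * X 1) ^ 2 ∣ theta₁ r 0 - C c * theta₁ r 1 := by
  have hC : (C c : MvPolynomial (Fin 2) K) ^ r = 1 := by rw [← C_pow, hc, C_1]
  refine (sub_sq_dvd_mul_pow_succ_sub_add_pow_succ (X 0) (C c * X 1) r).trans (dvd_of_eq ?_)
  simp only [theta₁, Matrix.cons_val_zero, Matrix.cons_val_one, map_natCast, map_add, map_one]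
  linear_combination C c * X 1 ^ (r + 1) * hC

theorem sub_sq_dvd_theta₂ {r : ℕ} (hr : 0 < r) {c : K} (hc : c ^ r = 1) :
    (X 0 - C c * X 1) ^ 2 ∣ theta₂ r 0 - C c * theta₂ r 1 := by
  obtain ⟨n, rfl⟩ : ∃ n, r = n + 1 := ⟨r - 1, by omega⟩
  have hC : (C c : MvPolynomial (Fin 2) K) ^ (n + 1) = 1 := by rw [← C_pow, hc, C_1]
  have key := sub_sq_dvd_mul_pow_succ_sub_add_pow_succ (C c * X 1) (X 0 : MvPolynomial (Fin 2) K) n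
  rw [← neg_sub, neg_sq] at key
  refine ((key.mul_left (X 0 ^ n)).mul_left (-C c)).trans (dvd_of_eq ?_)
  simp only [theta₂, Matrix.cons_val_zero, Matrix.cons_val_one, map_natCast, map_add,
    map_one, Nat.cast_add, Nat.cast_one, Nat.add_sub_cancel, add_sub_cancel_right]
  linear_combination ((n + 1) * X 0 ^ (n + 1) * X 1 ^ n - n * C c * X 0 ^ n * X 1 ^ (n + 1)) * hC

theorem derDet_theta₁_theta₂ {r : ℕ} (hr : 0 < r) :
    derDet (theta₁ r) (theta₂ r) = C (r : K) * (X 0 ^ r * (X 0 ^ r - X 1 ^ r) ^ 2) := by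
  obtain ⟨n, rfl⟩ : ∃ n, r = n + 1 := ⟨r - 1, by omega⟩
  simp only [derDet, theta₁, theta₂, Matrix.cons_val_zero, Matrix.cons_val_one, map_natCast,
    map_add, map_sub, map_one, Nat.cast_add, Nat.cast_one, Nat.add_sub_cancel]
  ring

theorem derDet_theta₁_theta₂_ne_zero {r : ℕ} (hr : (r : K) ≠ 0) :
    derDet (theta₁ (K := K) r) (theta₂ r) ≠ 0 := by
  have hr0 : 0 < r := Nat.pos_of_ne_zero (by rintro rfl; simp at hr)
  rw [derDet_theta₁_theta₂ hr0]
  intro h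
  exact hr (by simpa [hr0.ne'] using congrArg (eval ![1, 0]) h)

theorem isHomogDer_theta₁ (r : ℕ) : IsHomogDer (theta₁ (K := K) r) (r + 1) :=
  Fin.forall_fin_two.2 ⟨isHomogeneous_C_mul_X_pow _ _ _,
    ((isHomogeneous_C_mul_X_pow _ _ _).mul (isHomogeneous_X _ _)).sub (isHomogeneous_X_pow _ _)⟩

theorem isHomogDer_theta₂ {r : ℕ} (hr : 0 < r) : IsHomogDer (theta₂ (K := K) r) (2 * r - 1) := by
  obtain ⟨n, rfl⟩ : ∃ n, r = n + 1 := ⟨r - 1, by omega⟩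
  have h₀ : n + (1 + n) = 2 * (n + 1) - 1 := by omega
  have h₁ : n + (n + 1) = 2 * (n + 1) - 1 := by omega
  refine Fin.forall_fin_two.2 ⟨?_, ?_⟩ <;> simp only [theta₂, Matrix.cons_val_zero,
    Matrix.cons_val_one, Nat.add_sub_cancel]
  · exact h₀ ▸ (isHomogeneous_X_pow _ _).mul
      ((isHomogeneous_C_mul_X _ _).mul (isHomogeneous_X_pow _ _))
  · exact h₁ ▸ (isHomogeneous_X_pow _ _).mul
      ((isHomogeneous_X_pow _ _).add (isHomogeneous_C_mul_X_pow _ _ _))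

end RankTwo

end

open RankTwo

/-- The rank-2 multiarrangement in `ℂ²` with defining polynomial
`x₁^r (x₁^r - x₃^r)²` has the explicit basis
`θ₁ = r x₁^(r+1) ∂₁ + ((r+1) x₁^r x₃ - x₃^(r+1)) ∂₃` and
`θ₂ = x₁^(r-1)(r x₁ x₃^(r-1) ∂₁ + (x₁^r + (r-1) x₃^r) ∂₃)`, hence is free with
exponents `{r+1, 2r-1}`. -/
theorem rank2_explicit_basis_free
    (r : ℕ) (hr : 2 ≤ r) (ζ : ℂ) (hζ : IsPrimitiveRoot ζ r)
    (P : Finset (MvPolynomial (Fin 2) ℂ × ℕ))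
    (hP : P =
      {((MvPolynomial.X 0 : MvPolynomial (Fin 2) ℂ), r)} ∪
      ((Finset.range r).image fun j =>
        ((MvPolynomial.X 0 - MvPolynomial.C (ζ ^ j) * MvPolynomial.X 1 :
          MvPolynomial (Fin 2) ℂ), 2)))
    (θ₁ θ₂ : MvDer 2 ℂ)
    (hθ₁ : θ₁ = ![MvPolynomial.C (r : ℂ) * MvPolynomial.X 0 ^ (r + 1),
      MvPolynomial.C ((r : ℂ) + 1) * MvPolynomial.X 0 ^ r * MvPolynomial.X 1 -
        MvPolynomial.X 1 ^ (r + 1)])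
    (hθ₂ : θ₂ = ![MvPolynomial.X 0 ^ (r - 1) *
        (MvPolynomial.C (r : ℂ) * MvPolynomial.X 0 * MvPolynomial.X 1 ^ (r - 1)),
      MvPolynomial.X 0 ^ (r - 1) *
        (MvPolynomial.X 0 ^ r + MvPolynomial.C ((r : ℂ) - 1) * MvPolynomial.X 1 ^ r)]) :
    IsBasisOf ![θ₁, θ₂] (DmodP P) ∧ FreeWithExps (DmodP P) ![r + 1, 2 * r - 1] := by
  obtain rfl := hP
  obtain rfl : θ₁ = theta₁ r := hθ₁
  obtain rfl : θ₂ = theta₂ r := hθ₂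
  have hr₀ : 0 < r := by omega
  have hroot : ∀ j, (ζ ^ j) ^ r = 1 := fun j => by rw [← pow_mul, pow_mul', hζ.pow_eq_one, one_pow]
  have h₁ := (mem_DmodP_iff_dvd ζ r r 2).2
    ⟨X_pow_dvd_theta₁ r, fun j _ => sub_sq_dvd_theta₁ (hroot j)⟩
  have h₂ := (mem_DmodP_iff_dvd ζ r r 2).2
    ⟨X_pow_dvd_theta₂ hr₀, fun j _ => sub_sq_dvd_theta₂ hr₀ (hroot j)⟩
  have hrC : (r : ℂ) ≠ 0 := Nat.cast_ne_zero.2 hr₀.ne'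
  have hbasis := isBasisOf_of_derDet_dvd h₁ h₂ (derDet_theta₁_theta₂_ne_zero hrC)
    fun θ hθ θ' hθ' => by
      rw [mem_DmodP_iff_dvd] at hθ hθ'
      rw [derDet_theta₁_theta₂ hr₀, (isUnit_iff_ne_zero.2 hrC).map C |>.mul_left_dvd]
      refine X_pow_mul_pow_sub_pow_pow_dvd hζ hr₀ ?_ fun j hj =>
        dvd_derDet_of_dvd_sub_C_mul _ (hθ.2 j hj) (hθ'.2 j hj)
      exact dvd_derDet_of_dvd_sub_C_mul 0 (by simpa using hθ.1) (by simpa using hθ'.1)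
  refine ⟨hbasis, _, hbasis, Fin.forall_fin_two.2 ⟨isHomogDer_theta₁ r, isHomogDer_theta₂ hr₀⟩⟩
end
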